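/- arXiv:1410.3898 — 3 statements merged into one kernel-verified Lean document; each statement's English description precedes it below -/
import Mathlib

section
/- Let Q be an n×n real symmetric matrix with spectral decomposition Q = W diag(λ) W^T where W is orthogonal. For μ > 0, the unique minimizer of Tr(L) + (μ/2)‖L − Q‖_F² over symmetric positive semidefinite matrices L is L* = W diag(max{λ − μ⁻¹𝟙, 0}) W^T, where the max is taken componentwise. -/
/-!
Write `F L = tr L + (μ/2)‖L - Q‖²`. For any `S`, with `N := μ (S - Q) + I` (the gradient of `F`
at `S`), the identity `F L - F S = (μ/2)‖L - S‖² + ⟨L - S, N⟩` holds exactly. For `S = L*` we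
get `N = W diag(max(1 - μλ, 0)) Wᵀ`: it is PSD, and `⟨L*, N⟩ = 0` since `L*` and `N` are
diagonal in the same basis with complementary supports. Hence `⟨L - L*, N⟩ = tr(L N) ≥ 0` for
PSD `L`, so `F L ≥ F L* + (μ/2)‖L - L*‖²` on the cone, which gives minimality and uniqueness.
-/

open Matrix

open scoped ComplexOrder MatrixOrder in
theorem Matrix.PosSemidef.trace_mul_nonneg {ι 𝕜 : Type*} [Fintype ι] [RCLike 𝕜]
    {A B : Matrix ι ι 𝕜} (hA : A.PosSemidef) (hB : B.PosSemidef) : 0 ≤ (A * B).trace := by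
  classical
  obtain ⟨C, rfl⟩ := CStarAlgebra.nonneg_iff_eq_star_mul_self.mp hB.nonneg
  rw [star_eq_conjTranspose, ← mul_assoc, trace_mul_comm, ← mul_assoc]
  exact (hA.mul_mul_conjTranspose_same C).trace_nonneg

section ConjDiagonal

variable {ι R : Type*} [Fintype ι] [DecidableEq ι]

theorem Matrix.conj_diagonal_mul_conj_diagonal [CommSemiring R] {W : Matrix ι ι R}
    (hW : Wᵀ * W = 1) (a b : ι → R) :
    W * diagonal a * Wᵀ * (W * diagonal b * Wᵀ) = W * diagonal (a * b) * Wᵀ := by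
  calc W * diagonal a * Wᵀ * (W * diagonal b * Wᵀ)
      = W * diagonal a * (Wᵀ * W) * diagonal b * Wᵀ := by simp only [mul_assoc]
    _ = W * diagonal (a * b) * Wᵀ := by rw [hW, mul_one, mul_assoc W, diagonal_mul_diagonal']; rfl

theorem Matrix.conj_diagonal_smul_sub_add_one [CommRing R] {W : Matrix ι ι R}
    (hW : W * Wᵀ = 1) (c : R) (a b : ι → R) :
    c • (W * diagonal a * Wᵀ - W * diagonal b * Wᵀ) + 1 = W * diagonal (c • (a - b) + 1) * Wᵀ := by
  have hdiag : diagonal (c • (a - b) + 1) = c • (diagonal a - diagonal b) + 1 := by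
    ext i j
    rcases eq_or_ne i j with rfl | hij <;> simp [*]
  rw [hdiag, mul_add, add_mul, mul_one, hW, mul_smul_comm, smul_mul_assoc, mul_sub, sub_mul]

theorem Matrix.PosSemidef.conj_diagonal {W : Matrix ι ι ℝ} {d : ι → ℝ} (hd : 0 ≤ d) :
    (W * diagonal d * Wᵀ).PosSemidef := by
  simpa using (PosSemidef.diagonal hd).mul_mul_conjTranspose_same W

end ConjDiagonal

section TraceProx

variable {ι : Type*} [Fintype ι]

noncomputable def traceProxObjective (μ : ℝ) (Q L : Matrix ι ι ℝ) : ℝ :=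
  L.trace + μ / 2 * ∑ i, ∑ j, (L i j - Q i j) ^ 2

theorem Matrix.sum_sum_mul_eq_trace_mul_transpose (X Y : Matrix ι ι ℝ) :
    ∑ i, ∑ j, X i j * Y i j = (X * Yᵀ).trace := by
  simp [trace, mul_apply]

theorem Matrix.sum_sum_sq_eq_zero_iff {X : Matrix ι ι ℝ} : ∑ i, ∑ j, X i j ^ 2 = 0 ↔ X = 0 := by
  simpa [sq, sum_sum_mul_eq_trace_mul_transpose] using
    trace_mul_conjTranspose_self_eq_zero_iff (A := X)

variable [DecidableEq ι]

theorem traceProxObjective_sub (μ : ℝ) (Q S L : Matrix ι ι ℝ) :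
    traceProxObjective μ Q L - traceProxObjective μ Q S
      = μ / 2 * ∑ i, ∑ j, (L i j - S i j) ^ 2
        + ∑ i, ∑ j, (L i j - S i j) * (μ • (S - Q) + 1) i j := by
  have htrace (X : Matrix ι ι ℝ) : X.trace = ∑ i, ∑ j, X i j * (1 : Matrix ι ι ℝ) i j := by
    simp [trace, one_apply]
  simp only [traceProxObjective, htrace, Finset.mul_sum, ← Finset.sum_add_distrib,
    ← Finset.sum_sub_distrib]
  refine Finset.sum_congr rfl fun i _ => Finset.sum_congr rfl fun j _ => ?_
  simp only [Matrix.add_apply, Matrix.smul_apply, Matrix.sub_apply, smul_eq_mul]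
  ring

variable {μ : ℝ} {Q S : Matrix ι ι ℝ}

theorem traceProxObjective_add_le (hN : (μ • (S - Q) + 1).PosSemidef)
    (hSN : (S * (μ • (S - Q) + 1)).trace = 0) {L : Matrix ι ι ℝ} (hL : L.PosSemidef) :
    traceProxObjective μ Q S + μ / 2 * ∑ i, ∑ j, (L i j - S i j) ^ 2
      ≤ traceProxObjective μ Q L := by
  have hNt : (μ • (S - Q) + 1)ᵀ = μ • (S - Q) + 1 := by simpa using hN.isHermitian.eq
  have hinner : ∑ i, ∑ j, (L i j - S i j) * (μ • (S - Q) + 1) i j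
      = (L * (μ • (S - Q) + 1)).trace - (S * (μ • (S - Q) + 1)).trace := by
    rw [← trace_sub, ← sub_mul]
    conv_rhs => rw [← hNt]
    exact sum_sum_mul_eq_trace_mul_transpose (L - S) _
  linarith [traceProxObjective_sub μ Q S L, hL.trace_mul_nonneg hN]

theorem traceProxObjective_le (hμ : 0 ≤ μ) (hN : (μ • (S - Q) + 1).PosSemidef)
    (hSN : (S * (μ • (S - Q) + 1)).trace = 0) {L : Matrix ι ι ℝ} (hL : L.PosSemidef) :
    traceProxObjective μ Q S ≤ traceProxObjective μ Q L :=
  (le_add_of_nonneg_right (by positivity)).trans (traceProxObjective_add_le hN hSN hL)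

theorem eq_of_traceProxObjective_le (hμ : 0 < μ) (hN : (μ • (S - Q) + 1).PosSemidef)
    (hSN : (S * (μ • (S - Q) + 1)).trace = 0) {L : Matrix ι ι ℝ} (hL : L.PosSemidef)
    (hLS : traceProxObjective μ Q L ≤ traceProxObjective μ Q S) : L = S := by
  have hsq : ∑ i, ∑ j, (L i j - S i j) ^ 2 = 0 := by
    have hgrowth := traceProxObjective_add_le hN hSN hL
    have hnonneg : 0 ≤ ∑ i, ∑ j, (L i j - S i j) ^ 2 := by positivity
    nlinarith
  exact sub_eq_zero.mp (sum_sum_sq_eq_zero_iff.mp hsq)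

end TraceProx

theorem max_sub_inv_mul_max_one_sub_mul {μ : ℝ} (hμ : 0 < μ) (x : ℝ) :
    max (x - μ⁻¹) 0 * max (1 - μ * x) 0 = 0 := by
  rcases le_total x μ⁻¹ with hx | hx
  · rw [max_eq_right (by linarith), zero_mul]
  · rw [max_eq_right (a := 1 - μ * x) (by nlinarith [mul_inv_cancel₀ hμ.ne']), mul_zero]

theorem mul_max_sub_inv_sub_add_one {μ : ℝ} (hμ : 0 < μ) (x : ℝ) :
    μ * (max (x - μ⁻¹) 0 - x) + 1 = max (1 - μ * x) 0 := by
  have hμμ : μ * μ⁻¹ = 1 := mul_inv_cancel₀ hμ.ne'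
  rcases le_total x μ⁻¹ with hx | hx
  · rw [max_eq_right (by linarith), max_eq_left (by nlinarith)]
    ring
  · rw [max_eq_left (by linarith), max_eq_right (by nlinarith)]
    linear_combination -hμμ

theorem stmt_7_general (n : ℕ) (μ : ℝ) (hμ : 0 < μ)
    (Q W : Matrix (Fin n) (Fin n) ℝ) (lam : Fin n → ℝ)
    (hW : W * Wᵀ = 1 ∧ Wᵀ * W = 1)
    (hQ : Q = W * Matrix.diagonal lam * Wᵀ)
    (Lstar : Matrix (Fin n) (Fin n) ℝ)
    (hLstar : Lstar = W * Matrix.diagonal (fun i => max (lam i - μ⁻¹) 0) * Wᵀ)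
    (F : Matrix (Fin n) (Fin n) ℝ → ℝ)
    (hF : ∀ L, F L = L.trace + μ / 2 * ∑ i, ∑ j, (L i j - Q i j) ^ 2) :
    Lstar.PosSemidef ∧ (∀ L, L.PosSemidef → F Lstar ≤ F L) ∧
      ∀ L, L.PosSemidef → (∀ L', L'.PosSemidef → F L ≤ F L') → L = Lstar := by
  obtain ⟨hWWt, hWtW⟩ := hW
  obtain rfl : F = traceProxObjective μ Q := funext hF
  have hS : Lstar.PosSemidef := hLstar ▸ PosSemidef.conj_diagonal fun i => le_max_right _ _
  have hN : μ • (Lstar - Q) + 1 = W * diagonal (fun i => max (1 - μ * lam i) 0) * Wᵀ := by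
    rw [hLstar, hQ, conj_diagonal_smul_sub_add_one hWWt]
    exact congrArg (fun d => W * diagonal d * Wᵀ)
      (funext fun i => mul_max_sub_inv_sub_add_one hμ (lam i))
  have hNpsd : (μ • (Lstar - Q) + 1).PosSemidef :=
    hN ▸ PosSemidef.conj_diagonal fun i => le_max_right _ _
  have hSN : (Lstar * (μ • (Lstar - Q) + 1)).trace = 0 := by
    rw [hN, hLstar, conj_diagonal_mul_conj_diagonal hWtW]
    simp [Pi.mul_def, max_sub_inv_mul_max_one_sub_mul hμ]
  exact ⟨hS, fun L hL => traceProxObjective_le hμ.le hNpsd hSN hL,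
    fun L hL hmin => eq_of_traceProxObjective_le hμ hNpsd hSN hL (hmin Lstar hS)⟩

theorem stmt_7 (n : ℕ) (μ : ℝ) (hμ : 0 < μ)
    (Q W : Matrix (Fin n) (Fin n) ℝ) (lam : Fin n → ℝ)
    (hQsymm : Q.IsHermitian)
    (hW : W * Wᵀ = 1 ∧ Wᵀ * W = 1)
    (hQ : Q = W * Matrix.diagonal lam * Wᵀ)
    (Lstar : Matrix (Fin n) (Fin n) ℝ)
    (hLstar : Lstar = W * Matrix.diagonal (fun i => max (lam i - μ⁻¹) 0) * Wᵀ)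
    (F : Matrix (Fin n) (Fin n) ℝ → ℝ)
    (hF : ∀ L, F L = L.trace + μ / 2 * ∑ i, ∑ j, (L i j - Q i j) ^ 2) :
    Lstar.PosSemidef ∧ (∀ L, L.PosSemidef → F Lstar ≤ F L) ∧
      ∀ L, L.PosSemidef → (∀ L', L'.PosSemidef → F L ≤ F L') → L = Lstar :=
  stmt_7_general n μ hμ Q W lam hW hQ Lstar hLstar F hF
end

section
/- With D, S̄, and L̄ = D − S̄ defined as above for a graph G with community partition {N_ℓ}_{ℓ=1}^r, the matrix L̄ is symmetric positive semidefinite with rank(L̄) = r, diag(L̄) = 𝟙, L̄ ≥ 0 entrywise, and |S̄_{ij}| ≤ 1 for all i ≠ j with diag(S̄) = 0. In particular (L̄, S̄) is feasible for the constraint set χ := {(L,S) : π_Ω(L+S) = π_Ω(D), |S_{ij}| ≤ 1 ∀ i≠j, diag(L) = 𝟙, L ≥ 0, L ⪰ 0} for any index set Ω. -/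
theorem stmt_10 (n r : ℕ) (G : SimpleGraph (Fin n)) [DecidableRel G.Adj]
    (c : Fin n → Fin r) (hc : Function.Surjective c)
    (D S L : Matrix (Fin n) (Fin n) ℝ)
    (hD : ∀ i j, D i j = if i = j then 1 else if G.Adj i j then 1 else 0)
    (hS : ∀ i j, S i j =
      if i ≠ j ∧ c i = c j ∧ ¬ G.Adj i j then -1
      else if c i ≠ c j ∧ G.Adj i j then 1
      else 0)
    (hL : L = D - S)
    (Ω : Set ((Fin n) × (Fin n))) :
    L.PosSemidef ∧ L.rank = r ∧
      (∀ i, L i i = 1) ∧ (∀ i j, 0 ≤ L i j) ∧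
      (∀ i j, i ≠ j → |S i j| ≤ 1) ∧ (∀ i, S i i = 0) ∧
      (∀ i j, (i, j) ∈ Ω → (L + S) i j = D i j) := by
  have hLij : ∀ i j, L i j = if c i = c j then 1 else 0 := by
    intro i j
    rw [hL]
    simp only [Matrix.sub_apply, hD, hS]
    by_cases hij : i = j
    · subst hij; simp [G.irrefl]
    · by_cases hcc : c i = c j
      · by_cases ha : G.Adj i j <;> simp [hij, hcc, ha]
      · by_cases ha : G.Adj i j <;> simp [hij, hcc, ha]
  set A : Matrix (Fin r) (Fin n) ℝ := Matrix.of (fun k i => if c i = k then 1 else 0) with hA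
  have hLA : L = A.conjTranspose * A := by
    ext i j
    rw [hLij]
    simp only [Matrix.mul_apply, Matrix.conjTranspose_apply, hA, Matrix.of_apply, star_trivial]
    have h1 : ∀ k, (if c i = k then (1:ℝ) else 0) * (if c j = k then 1 else 0)
        = if k = c i then (if c j = c i then 1 else 0) else 0 := by
      intro k
      by_cases h : k = c i <;> simp [h, eq_comm]
    simp_rw [h1]
    rw [Finset.sum_ite_eq']
    by_cases hcc : c i = c j <;> simp [hcc, eq_comm]
  have hAr : A.rank = r := by
    have hsurj : Function.Surjective A.mulVecLin := by
      intro y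
      refine ⟨fun i => if i = (hc (c i)).choose then y (c i) else 0, ?_⟩
      ext k
      simp only [Matrix.mulVecLin_apply, Matrix.mulVec, dotProduct, hA, Matrix.of_apply]
      have h2 : ∀ i, (if c i = k then (1:ℝ) else 0) *
          (if i = (hc (c i)).choose then y (c i) else 0)
          = if i = (hc k).choose then y k else 0 := by
        intro i
        by_cases h1 : i = (hc k).choose
        · subst h1
          have h3 : c (hc k).choose = k := (hc k).choose_spec
          simp [h3]
        · by_cases h3 : c i = k
          · simp [h3, h1]
          · simp [h3, h1]
      simp_rw [h2]
      rw [Finset.sum_ite_eq']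
      simp
    rw [Matrix.rank, LinearMap.range_eq_top.mpr hsurj]
    simp
  refine ⟨?_, ?_, ?_, ?_, ?_, ?_, ?_⟩
  · rw [hLA]; exact Matrix.posSemidef_conjTranspose_mul_self A
  · rw [hLA, Matrix.rank_conjTranspose_mul_self, hAr]
  · intro i; rw [hLij]; simp
  · intro i j; rw [hLij]; by_cases h : c i = c j <;> simp [h]
  · intro i j hij
    rw [hS]
    by_cases h1 : i ≠ j ∧ c i = c j ∧ ¬ G.Adj i j
    · simp [h1]
    · by_cases h2 : c i ≠ c j ∧ G.Adj i j <;> simp [h1, h2]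
  · intro i; rw [hS]; simp
  · intro i j _
    rw [hL]
    simp
end

section
/- Let Ω ⊆ {1,...,n}² and D ∈ ℝ^{n×n}. The optimization problem min{‖L‖_* + ρ‖S‖₁ : π_Ω(L+S) = π_Ω(D)} has the same optimal value as min{‖L‖_* + ρ‖π_Ω(S)‖₁ : L + S = π_Ω(D)}; specifically, for every feasible pair of one problem there is a feasible pair of the other with objective value no larger. -/
noncomputable def nuclearNorm {n : ℕ} (L : Matrix (Fin n) (Fin n) ℝ) : ℝ :=
  ∑ i, Real.sqrt ((show (Matrix.transpose L * L).IsHermitian by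
    simpa [Matrix.conjTranspose_eq_transpose_of_trivial] using Matrix.isHermitian_conjTranspose_mul_self L).eigenvalues i)

/-!
The sampling operator `π_Ω` is additive, idempotent and shrinks every entry. So from a pair
`(L, S)` with `π_Ω (L + S) = π_Ω D` one gets `L + (π_Ω D - L) = π_Ω D` with
`π_Ω (π_Ω D - L) = π_Ω S`, and conversely `(L', π_Ω S')` satisfies `π_Ω (L' + π_Ω S') = π_Ω D`;
in both cases the nuclear-norm term is unchanged and the `ℓ¹` term can only decrease.
-/

def IsMaskProjection {m n R : Type*} [Zero R]
    (Ω : Set (m × n)) [DecidablePred (· ∈ Ω)] (proj : Matrix m n R → Matrix m n R) : Prop :=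
  ∀ Z i j, proj Z i j = if (i, j) ∈ Ω then Z i j else 0

namespace IsMaskProjection

variable {m n R : Type*} {Ω : Set (m × n)} [DecidablePred (· ∈ Ω)]
  {proj : Matrix m n R → Matrix m n R}

theorem map_add [AddZeroClass R] (hproj : IsMaskProjection Ω proj) (A B : Matrix m n R) :
    proj (A + B) = proj A + proj B := by
  ext i j
  rw [Matrix.add_apply, hproj, hproj, hproj]
  split_ifs <;> simp

theorem map_sub [SubNegZeroMonoid R] (hproj : IsMaskProjection Ω proj) (A B : Matrix m n R) :
    proj (A - B) = proj A - proj B := by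
  ext i j
  rw [Matrix.sub_apply, hproj, hproj, hproj]
  split_ifs <;> simp

theorem idem [Zero R] (hproj : IsMaskProjection Ω proj) (A : Matrix m n R) :
    proj (proj A) = proj A := by
  ext i j
  rw [hproj, hproj]
  split_ifs <;> rfl

theorem abs_apply_le [AddCommGroup R] [LinearOrder R] [IsOrderedAddMonoid R]
    (hproj : IsMaskProjection Ω proj) (A : Matrix m n R) (i : m) (j : n) :
    |proj A i j| ≤ |A i j| := by
  rw [hproj]
  split_ifs
  · rfl
  · simp

theorem sum_abs_le [Fintype m] [Fintype n] [AddCommGroup R] [LinearOrder R] [IsOrderedAddMonoid R]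
    (hproj : IsMaskProjection Ω proj) (A : Matrix m n R) :
    ∑ i, ∑ j, |proj A i j| ≤ ∑ i, ∑ j, |A i j| :=
  Finset.sum_le_sum fun i _ => Finset.sum_le_sum fun j _ => hproj.abs_apply_le A i j

end IsMaskProjection

theorem stmt_19 (n : ℕ) (ρ : ℝ) (hρ : 0 < ρ)
    (Ω : Set ((Fin n) × (Fin n))) [DecidablePred (· ∈ Ω)]
    (D : Matrix (Fin n) (Fin n) ℝ)
    (proj : Matrix (Fin n) (Fin n) ℝ → Matrix (Fin n) (Fin n) ℝ)
    (hproj : ∀ Z i j, proj Z i j = if (i, j) ∈ Ω then Z i j else 0) :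
    (∀ L S : Matrix (Fin n) (Fin n) ℝ, proj (L + S) = proj D →
      ∃ L' S' : Matrix (Fin n) (Fin n) ℝ, L' + S' = proj D ∧
        nuclearNorm L' + ρ * ∑ i, ∑ j, |proj S' i j| ≤
          nuclearNorm L + ρ * ∑ i, ∑ j, |S i j|) ∧
    (∀ L' S' : Matrix (Fin n) (Fin n) ℝ, L' + S' = proj D →
      ∃ L S : Matrix (Fin n) (Fin n) ℝ, proj (L + S) = proj D ∧
        nuclearNorm L + ρ * ∑ i, ∑ j, |S i j| ≤
          nuclearNorm L' + ρ * ∑ i, ∑ j, |proj S' i j|) := by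
  have hmask : IsMaskProjection Ω proj := hproj
  constructor
  · intro L S h
    refine ⟨L, proj D - L, add_sub_cancel L _, ?_⟩
    have hS : proj (proj D - L) = proj S := by
      rw [hmask.map_sub, hmask.idem, ← h, hmask.map_add, add_sub_cancel_left]
    rw [hS]
    gcongr _ + ρ * ?_
    exact hmask.sum_abs_le S
  · intro L' S' h
    refine ⟨L', proj S', ?_, le_rfl⟩
    rw [hmask.map_add, hmask.idem, ← hmask.map_add, h, hmask.idem]
end
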